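/- Suppose the quaternion algebra ℍ[K,a,π] with a ∈ O_K^× is a division ring (equivalently, the quadratic form ⟨1,-a,-π,aπ⟩ is anisotropic over K). Then the residue ā ∈ k of a is not a square in the residue field k; consequently k(√ā) is a quadratic field extension of k. -/

import Mathlib

/-! If `ā` were a square in `k`, Hensel's lemma would lift it to a square root of `a` in `K`:
since `2` is a unit, Newton's iteration `x ↦ (x + a / x) / 2` satisfies
`x'² - a = ((x² - a) / 2x)²`, so it squares the error, and by completeness it converges to
some `L` with `L² = a`. But then `(L, 1, 0, 0)` is an isotropic vector of the norm form. -/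

noncomputable section

/-- A surjective discrete valuation `ν : K → ℤ` on a field `K`
(the value of `ν` at `0` is irrelevant: only nonzero elements are constrained). -/
structure DVal (K : Type) [Field K] : Type where
  ν : K → ℤ
  ν_mul : ∀ x y : K, x ≠ 0 → y ≠ 0 → ν (x * y) = ν x + ν y
  ν_add : ∀ x y : K, x ≠ 0 → y ≠ 0 → x + y ≠ 0 → min (ν x) (ν y) ≤ ν (x + y)
  ν_one : ν 1 = 0
  ν_surj : ∀ n : ℤ, ∃ x : K, x ≠ 0 ∧ ν x = n

namespace DVal

variable {K : Type} [Field K]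

/-- `x` belongs to the valuation ring `O_K`. -/
def Int (V : DVal K) (x : K) : Prop := x = 0 ∨ 0 ≤ V.ν x

/-- `x` is a unit of the valuation ring `O_K`. -/
def IntUnit (V : DVal K) (x : K) : Prop := x ≠ 0 ∧ V.ν x = 0

/-- `x` belongs to the maximal ideal `m_K` of the valuation ring `O_K`. -/
def MaxIdeal (V : DVal K) (x : K) : Prop := x = 0 ∨ 1 ≤ V.ν x

/-- `K` is complete with respect to the valuation `ν`: every Cauchy sequence converges. -/
def IsComplete (V : DVal K) : Prop :=
  ∀ f : ℕ → K,
    (∀ M : ℤ, ∃ N : ℕ, ∀ m n : ℕ, N ≤ m → N ≤ n →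
      f m - f n = 0 ∨ M ≤ V.ν (f m - f n)) →
    ∃ L : K, ∀ M : ℤ, ∃ N : ℕ, ∀ n : ℕ, N ≤ n →
      f n - L = 0 ∨ M ≤ V.ν (f n - L)

/-- The residue field `k = O_K/m_K` has characteristic different from `2`,
i.e. `2` is a unit of the valuation ring `O_K`. -/
def ResCharNeTwo (V : DVal K) : Prop := (2 : K) ≠ 0 ∧ V.ν 2 = 0

end DVal

/-- The reduced norm of a quaternion `u = δ + αx + βy + γz ∈ ℍ[K,a,b]`:
`Nrd u = u·τ(u) = δ² - aα² - bβ² + abγ²`. -/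
def qnrd {K : Type} [Field K] (a b : K) (u : QuaternionAlgebra K a 0 b) : K :=
  u.re ^ 2 - a * u.imI ^ 2 - b * u.imJ ^ 2 + a * b * u.imK ^ 2

/-- The canonical involution `τ(δ + αx + βy + γz) = δ - αx - βy - γz` of `ℍ[K,a,b]`. -/
def qtau {K : Type} [Field K] {a b : K} (u : QuaternionAlgebra K a 0 b) :
    QuaternionAlgebra K a 0 b :=
  ⟨u.re, -u.imI, -u.imJ, -u.imK⟩

/-- The norm form `⟨1,-a,-b,ab⟩` of `ℍ[K,a,b]` is anisotropic over `K`
(equivalently, `ℍ[K,a,b]` is a division ring). -/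
def QAniso {K : Type} [Field K] (a b : K) : Prop :=
  ∀ d e f g : K, d ^ 2 - a * e ^ 2 - b * f ^ 2 + a * b * g ^ 2 = 0 →
    d = 0 ∧ e = 0 ∧ f = 0 ∧ g = 0

/-- The valuation `ν_D(u) = (1/2)·ν_K(Nrd u)` of the quaternion division algebra
`D = ℍ[K,a,b]` (at nonzero `u`). -/
def qnu {K : Type} [Field K] (V : DVal K) (a b : K) (u : QuaternionAlgebra K a 0 b) : ℚ :=
  (V.ν (qnrd a b u) : ℚ) / 2

def newtonSqrt {K : Type} [Field K] (a c : K) : ℕ → K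
  | 0 => c
  | n + 1 => (newtonSqrt a c n + a / newtonSqrt a c n) / 2

lemma newton_sq_sub {K : Type} [Field K] {a x : K} (h2 : (2 : K) ≠ 0) (hx : x ≠ 0) :
    ((x + a / x) / 2) ^ 2 - a = ((x ^ 2 - a) / (2 * x)) ^ 2 := by
  field_simp
  ring

lemma newton_sub {K : Type} [Field K] {a x : K} (h2 : (2 : K) ≠ 0) (hx : x ≠ 0) :
    (x + a / x) / 2 - x = -(x ^ 2 - a) / (2 * x) := by
  field_simp
  ring

namespace DVal

variable {K : Type} [Field K] (V : DVal K)

lemma ν_neg_one : V.ν (-1 : K) = 0 := by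
  have h := V.ν_mul (-1) (-1) (by norm_num) (by norm_num)
  rw [neg_one_mul, neg_neg, V.ν_one] at h
  omega

lemma ν_neg {x : K} (hx : x ≠ 0) : V.ν (-x) = V.ν x := by
  rw [← neg_one_mul, V.ν_mul _ _ (by norm_num) hx, V.ν_neg_one, zero_add]

lemma ν_inv {x : K} (hx : x ≠ 0) : V.ν x⁻¹ = -V.ν x := by
  have h := V.ν_mul x x⁻¹ hx (inv_ne_zero hx)
  rw [mul_inv_cancel₀ hx, V.ν_one] at h
  omega

/-- `x ∈ π ^ n • O_K`; `V.Int` and `V.MaxIdeal` are the cases `n = 0` and `n = 1`. -/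
def MemPow (n : ℤ) (x : K) : Prop := x = 0 ∨ n ≤ V.ν x

variable {V} {m n : ℤ} {x y : K}

lemma memPow_iff_of_ne_zero (hx : x ≠ 0) : V.MemPow n x ↔ n ≤ V.ν x := by
  simp [MemPow, hx]

lemma memPow_ν (x : K) : V.MemPow (V.ν x) x := .inr le_rfl

lemma memPow_zero (n : ℤ) : V.MemPow n (0 : K) := .inl rfl

lemma MemPow.mono (hmn : m ≤ n) (hx : V.MemPow n x) : V.MemPow m x :=
  hx.imp_right hmn.trans

lemma MemPow.neg (hx : V.MemPow n x) : V.MemPow n (-x) := by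
  rcases eq_or_ne x 0 with rfl | hx0
  · simpa using memPow_zero n
  rw [memPow_iff_of_ne_zero (neg_ne_zero.2 hx0), V.ν_neg hx0]
  exact (memPow_iff_of_ne_zero hx0).1 hx

lemma MemPow.add (hx : V.MemPow n x) (hy : V.MemPow n y) : V.MemPow n (x + y) := by
  rcases eq_or_ne x 0 with rfl | hx0
  · simpa using hy
  rcases eq_or_ne y 0 with rfl | hy0
  · simpa using hx
  rcases eq_or_ne (x + y) 0 with hxy | hxy
  · exact .inl hxy
  rw [memPow_iff_of_ne_zero hx0] at hx
  rw [memPow_iff_of_ne_zero hy0] at hy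
  exact .inr ((le_min hx hy).trans (V.ν_add x y hx0 hy0 hxy))

lemma MemPow.sub (hx : V.MemPow n x) (hy : V.MemPow n y) : V.MemPow n (x - y) := by
  simpa [sub_eq_add_neg] using hx.add hy.neg

lemma MemPow.mul (hx : V.MemPow m x) (hy : V.MemPow n y) : V.MemPow (m + n) (x * y) := by
  rcases eq_or_ne x 0 with rfl | hx0
  · simpa using memPow_zero (m + n)
  rcases eq_or_ne y 0 with rfl | hy0
  · simpa using memPow_zero (m + n)
  rw [memPow_iff_of_ne_zero hx0] at hx
  rw [memPow_iff_of_ne_zero hy0] at hy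
  exact .inr (by rw [V.ν_mul x y hx0 hy0]; omega)

lemma eq_zero_of_forall_memPow (h : ∀ n, V.MemPow n x) : x = 0 :=
  (h (V.ν x + 1)).resolve_right (by omega)

lemma IntUnit.memPow_zero (hx : V.IntUnit x) : V.MemPow 0 x := .inr hx.2.ge

lemma IntUnit.mul (hx : V.IntUnit x) (hy : V.IntUnit y) : V.IntUnit (x * y) :=
  ⟨mul_ne_zero hx.1 hy.1, by rw [V.ν_mul x y hx.1 hy.1, hx.2, hy.2, add_zero]⟩

lemma IntUnit.inv (hx : V.IntUnit x) : V.IntUnit x⁻¹ :=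
  ⟨inv_ne_zero hx.1, by rw [V.ν_inv hx.1, hx.2, neg_zero]⟩

lemma MemPow.div_intUnit (hx : V.MemPow n x) (hy : V.IntUnit y) : V.MemPow n (x / y) := by
  simpa [div_eq_mul_inv] using hx.mul hy.inv.memPow_zero

lemma ν_add_eq_of_memPow (hx : x ≠ 0) (hy : V.MemPow (V.ν x + 1) y) :
    x + y ≠ 0 ∧ V.ν (x + y) = V.ν x := by
  have hxy : ¬ V.MemPow (V.ν x + 1) (x + y) := fun h => by
    have := (memPow_iff_of_ne_zero hx).1 (by simpa using h.sub hy)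
    omega
  have hne : x + y ≠ 0 := fun h => hxy (.inl h)
  have hle := (memPow_iff_of_ne_zero hne).1 ((memPow_ν x).add (hy.mono (by omega)))
  rw [memPow_iff_of_ne_zero hne] at hxy
  exact ⟨hne, by omega⟩

lemma intUnit_of_sq_sub_memPow {a : K} (ha : V.IntUnit a) (hx : V.MemPow 1 (x ^ 2 - a)) :
    V.IntUnit x := by
  obtain ⟨hne, hν⟩ := ν_add_eq_of_memPow ha.1 (by rwa [ha.2])
  rw [add_sub_cancel] at hne
  rw [add_sub_cancel, ha.2] at hν
  have hx0 : x ≠ 0 := by rintro rfl; simp at hne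
  refine ⟨hx0, ?_⟩
  rw [pow_two, V.ν_mul x x hx0 hx0] at hν
  omega

variable {a c : K}

lemma memPow_newton_step (h2 : V.ResCharNeTwo) (hx : V.IntUnit x)
    (hn : V.MemPow n (x ^ 2 - a)) :
    V.MemPow (n + n) (((x + a / x) / 2) ^ 2 - a) ∧ V.MemPow n ((x + a / x) / 2 - x) := by
  have h2x : V.IntUnit (2 * x) := IntUnit.mul h2 hx
  rw [newton_sq_sub h2.1 hx.1, newton_sub h2.1 hx.1, pow_two]
  exact ⟨(hn.div_intUnit h2x).mul (hn.div_intUnit h2x), hn.neg.div_intUnit h2x⟩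

lemma memPow_newtonSqrt_sq_sub (h2 : V.ResCharNeTwo) (ha : V.IntUnit a)
    (hc : V.MemPow 1 (c ^ 2 - a)) (k : ℕ) : V.MemPow (k + 1) (newtonSqrt a c k ^ 2 - a) := by
  induction k with
  | zero => simpa [newtonSqrt] using hc
  | succ k ih =>
    have hx := intUnit_of_sq_sub_memPow ha (ih.mono (by omega))
    exact (memPow_newton_step h2 hx ih).1.mono (by push_cast; omega)

lemma IsComplete.exists_memPow_sub (hV : V.IsComplete) {f : ℕ → K}
    (hf : ∀ k : ℕ, V.MemPow k (f (k + 1) - f k)) :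
    ∃ L, ∀ k : ℕ, V.MemPow k (f k - L) := by
  have hfar (k j : ℕ) : V.MemPow k (f (k + j) - f k) := by
    induction j with
    | zero => simpa using memPow_zero (V := V) k
    | succ j ih =>
      have := (hf (k + j)).mono (m := k) (by push_cast; omega)
      simpa [← add_assoc] using this.add ih
  have hcauchy (k i j : ℕ) (hi : k ≤ i) (hj : k ≤ j) : V.MemPow k (f i - f j) := by
    obtain ⟨i, rfl⟩ := Nat.exists_eq_add_of_le hi
    obtain ⟨j, rfl⟩ := Nat.exists_eq_add_of_le hj
    simpa using (hfar k i).sub (hfar k j)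
  obtain ⟨L, hL⟩ := hV f fun M => ⟨M.toNat, fun i j hi hj =>
    (hcauchy M.toNat i j hi hj).mono (Int.self_le_toNat M)⟩
  refine ⟨L, fun k => ?_⟩
  obtain ⟨N, hN⟩ := hL k
  simpa using (hcauchy k k (max N k) le_rfl (le_max_right N k)).add (hN _ (le_max_left N k))

theorem IsComplete.exists_sq_eq (hV : V.IsComplete) (h2 : V.ResCharNeTwo) (ha : V.IntUnit a)
    (hc : V.MemPow 1 (c ^ 2 - a)) : ∃ L, L ^ 2 = a := by
  set f := newtonSqrt a c
  have hsq (k : ℕ) : V.MemPow (k + 1) (f k ^ 2 - a) := memPow_newtonSqrt_sq_sub h2 ha hc k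
  have hunit (k : ℕ) : V.IntUnit (f k) := intUnit_of_sq_sub_memPow ha ((hsq k).mono (by omega))
  have hstep (k : ℕ) : V.MemPow k (f (k + 1) - f k) :=
    (memPow_newton_step h2 (hunit k) (hsq k)).2.mono (by omega)
  obtain ⟨L, hL⟩ := hV.exists_memPow_sub hstep
  refine ⟨L, sub_eq_zero.1 (eq_zero_of_forall_memPow (V := V) fun m => ?_)⟩
  set k := m.toNat
  have hsum : V.MemPow 0 (f k + L) := by
    simpa using ((hunit k).memPow_zero.add (hunit k).memPow_zero).sub ((hL k).mono (by omega))
  have hdiff : L ^ 2 - a = (f k ^ 2 - a) - (f k - L) * (f k + L) := by ring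
  rw [hdiff]
  have hprod : V.MemPow k ((f k - L) * (f k + L)) := by simpa using (hL k).mul hsum
  exact (((hsq k).mono (by omega)).sub hprod).mono (Int.self_le_toNat m)

end DVal

lemma QAniso.sq_ne {K : Type} [Field K] {a b : K} (h : QAniso a b) (L : K) : L ^ 2 ≠ a :=
  fun hL => one_ne_zero (h L 1 0 0 (by rw [hL]; ring)).2.1

theorem stmt_11_general (K : Type) [Field K] (V : DVal K)
    -- K is complete with residue field of characteristic ≠ 2
    (hcomp : V.IsComplete) (hchar : V.ResCharNeTwo)
    -- D = ℍ[K,a,ϖ] with a ∈ O_K^×, ϖ a uniformizer, D a division ring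
    (a ϖ : K) (ha0 : a ≠ 0) (hva : V.ν a = 0)
    (haniso : QAniso a ϖ)
 :
    ∀ c : K, V.Int c → ¬ V.MaxIdeal (a - c ^ 2) := by
  intro c _ hc
  have hc' : V.MemPow 1 (a - c ^ 2) := hc
  obtain ⟨L, hL⟩ := hcomp.exists_sq_eq hchar ⟨ha0, hva⟩ (by simpa using hc'.neg)
  exact haniso.sq_ne L hL

/-- if `ℍ[K,a,ϖ]` is a division ring (with `a ∈ O_K^×`, `ϖ` a uniformizer) then
the residue of `a` is not a square in the residue field `k`: no square of an element of `O_K`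
is congruent to `a` modulo `m_K`. -/
theorem stmt_11 (K : Type) [Field K] (V : DVal K)
    -- K is complete with residue field of characteristic ≠ 2
    (hcomp : V.IsComplete) (hchar : V.ResCharNeTwo)
    -- D = ℍ[K,a,ϖ] with a ∈ O_K^×, ϖ a uniformizer, D a division ring
    (a ϖ : K) (ha0 : a ≠ 0) (hva : V.ν a = 0) (hϖ0 : ϖ ≠ 0) (hvϖ : V.ν ϖ = 1)
    (haniso : QAniso a ϖ)
 :
    ∀ c : K, V.Int c → ¬ V.MaxIdeal (a - c ^ 2) :=
  stmt_11_general K V hcomp hchar a ϖ ha0 hva haniso
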